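/- arXiv:2505.17170 — 4 statements merged into one kernel-verified Lean document; each statement's English description precedes it below -/
import Mathlib

section
/- For any square complex matrix A and any t ≥ 0, the operator norm of the matrix exponential satisfies ‖e^{At}‖ ≤ e^{μ(A)t}, where μ(A) = lim_{h→0⁺} (‖I + hA‖ − 1)/h is the logarithmic norm of A with respect to the induced operator norm. -/
open scoped Matrix.Norms.L2Operator Topology

lemma aux_norm_one_le {n : ℕ} : ‖(1 : Matrix (Fin n) (Fin n) ℂ)‖ ≤ 1 := by
  rw [Matrix.cstar_norm_def, map_one]
  exact ContinuousLinearMap.norm_id_le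

open scoped Matrix.Norms.L2Operator Topology
set_option maxHeartbeats 2000000 in
lemma aux_exp_remainder {n : ℕ} (x : Matrix (Fin n) (Fin n) ℂ) :
    ‖NormedSpace.exp x - 1 - x‖ ≤ ‖x‖ ^ 2 * Real.exp ‖x‖ := by
  have hs : Summable (fun k : ℕ => ((Nat.factorial k : ℂ))⁻¹ • x ^ k) :=
    NormedSpace.expSeries_summable' x
  have hns : Summable (fun k : ℕ => ‖((Nat.factorial k : ℂ))⁻¹ • x ^ k‖) :=
    NormedSpace.norm_expSeries_summable' x
  have hnshift2 : Summable (fun k : ℕ => ‖((Nat.factorial (k+2) : ℂ))⁻¹ • x ^ (k+2)‖) :=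
    (summable_nat_add_iff 2).2 hns
  have hre : Summable (fun k : ℕ => ‖x‖ ^ 2 * (‖x‖ ^ k / Nat.factorial k)) :=
    (Real.summable_pow_div_factorial ‖x‖).mul_left _
  have heq : NormedSpace.exp x - 1 - x = ∑' k : ℕ, ((Nat.factorial (k+2) : ℂ))⁻¹ • x ^ (k+2) := by
    rw [NormedSpace.exp_eq_tsum ℂ]
    beta_reduce
    have h1 : Summable (fun k : ℕ => ((Nat.factorial (k+1) : ℂ))⁻¹ • x ^ (k+1)) :=
      (summable_nat_add_iff 1).2 hs
    rw [hs.tsum_eq_zero_add, h1.tsum_eq_zero_add]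
    simp
  rw [heq]
  calc ‖∑' k : ℕ, ((Nat.factorial (k+2) : ℂ))⁻¹ • x ^ (k+2)‖
      ≤ ∑' k : ℕ, ‖((Nat.factorial (k+2) : ℂ))⁻¹ • x ^ (k+2)‖ := norm_tsum_le_tsum_norm hnshift2
    _ ≤ ∑' k : ℕ, ‖x‖ ^ 2 * (‖x‖ ^ k / Nat.factorial k) := by
        refine Summable.tsum_le_tsum (fun k => ?_) hnshift2 hre
        rw [norm_smul]
        have h1 : ‖((Nat.factorial (k+2) : ℂ))⁻¹‖ = ((Nat.factorial (k+2) : ℝ))⁻¹ := by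
          simp
        rw [h1]
        have h2 : ‖x ^ (k+2)‖ ≤ ‖x‖ ^ (k+2) := norm_pow_le' x (Nat.succ_pos _)
        have h3 : ((Nat.factorial (k+2) : ℝ))⁻¹ ≤ ((Nat.factorial k : ℝ))⁻¹ := by
          apply inv_anti₀
          · positivity
          · exact_mod_cast Nat.factorial_le (Nat.le_add_right k 2)
        calc ((Nat.factorial (k+2) : ℝ))⁻¹ * ‖x ^ (k+2)‖
            ≤ ((Nat.factorial k : ℝ))⁻¹ * ‖x‖ ^ (k+2) :=
              mul_le_mul h3 h2 (norm_nonneg _) (by positivity)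
          _ = ‖x‖ ^ 2 * (‖x‖ ^ k / Nat.factorial k) := by ring
    _ = ‖x‖ ^ 2 * ∑' k : ℕ, (‖x‖ ^ k / Nat.factorial k) := tsum_mul_left
    _ = ‖x‖ ^ 2 * Real.exp ‖x‖ := by
        rw [Real.exp_eq_exp_ℝ, NormedSpace.exp_eq_tsum_div]

set_option maxHeartbeats 2000000 in
/-- For any square complex matrix `A` and `t ≥ 0`, `‖exp(A t)‖ ≤ exp (μ(A) t)`, where
`μ(A) = lim_{h→0⁺} (‖I + h A‖ - 1)/h` is the logarithmic norm of `A` with respect to the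
induced (ℓ²) operator norm. -/
theorem exp_norm_le_exp_logNorm {n : ℕ} (A : Matrix (Fin n) (Fin n) ℂ) (μ : ℝ)
    (hμ : Filter.Tendsto
      (fun h : ℝ => (‖(1 : Matrix (Fin n) (Fin n) ℂ) + (h : ℂ) • A‖ - 1) / h)
      (nhdsWithin 0 (Set.Ioi 0)) (nhds μ)) :
    ∀ t : ℝ, 0 ≤ t → ‖NormedSpace.exp ((t : ℂ) • A)‖ ≤ Real.exp (μ * t) := by
  intro t ht
  rcases eq_or_lt_of_le ht with h0 | htpos
  · rw [← h0]
    simp only [Complex.ofReal_zero, zero_smul, NormedSpace.exp_zero, mul_zero, Real.exp_zero]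
    exact aux_norm_one_le
  · set C : ℝ := ‖A‖ ^ 2 * Real.exp (t * ‖A‖) with hCdef
    have key : ∀ ε > (0:ℝ), ‖NormedSpace.exp ((t : ℂ) • A)‖ ≤ Real.exp ((μ + ε) * t) := by
      intro ε hε
      have hev : ∀ᶠ (h : ℝ) in 𝓝[>] (0:ℝ),
          (‖(1 : Matrix (Fin n) (Fin n) ℂ) + (h : ℂ) • A‖ - 1) / h < μ + ε :=
        hμ.eventually_lt_const (lt_add_of_pos_right μ hε)
      rw [eventually_nhdsWithin_iff, Metric.eventually_nhds_iff] at hev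
      obtain ⟨δ, hδpos, hδ⟩ := hev
      have bound_m : ∀ m : ℕ, 1 ≤ m → t / m < δ →
          ‖NormedSpace.exp ((t : ℂ) • A)‖ ≤ Real.exp ((μ + ε) * t + C * t ^ 2 / m) := by
        intro m hm1 hmδ
        set h : ℝ := t / m with hh
        have hmpos : (0:ℝ) < m := by exact_mod_cast hm1
        have hhpos : 0 < h := div_pos htpos hmpos
        have hht : h ≤ t := div_le_self htpos.le (by exact_mod_cast hm1)
        have hn1 : ‖(1 : Matrix (Fin n) (Fin n) ℂ) + (h : ℂ) • A‖ ≤ 1 + (μ + ε) * h := by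
          have := hδ (y := h) (by rw [Real.dist_eq, sub_zero, abs_of_pos hhpos]; exact hmδ)
            (Set.mem_Ioi.mpr hhpos)
          rw [div_lt_iff₀ hhpos] at this
          linarith
        have hnhA : ‖(h : ℂ) • A‖ = h * ‖A‖ := by
          rw [norm_smul, Complex.norm_real, Real.norm_of_nonneg hhpos.le]
        have hstep : ‖NormedSpace.exp ((h : ℂ) • A)‖ ≤ Real.exp ((μ + ε) * h + C * h ^ 2) := by
          have hdec : NormedSpace.exp ((h : ℂ) • A) =
              ((1 : Matrix (Fin n) (Fin n) ℂ) + (h : ℂ) • A) +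
              (NormedSpace.exp ((h : ℂ) • A) - 1 - (h : ℂ) • A) := by abel
          have htri : ‖NormedSpace.exp ((h : ℂ) • A)‖ ≤
              ‖(1 : Matrix (Fin n) (Fin n) ℂ) + (h : ℂ) • A‖ +
              ‖NormedSpace.exp ((h : ℂ) • A) - 1 - (h : ℂ) • A‖ := by
            calc ‖NormedSpace.exp ((h : ℂ) • A)‖
                = ‖((1 : Matrix (Fin n) (Fin n) ℂ) + (h : ℂ) • A) +
                  (NormedSpace.exp ((h : ℂ) • A) - 1 - (h : ℂ) • A)‖ := congrArg _ hdec
              _ ≤ _ := norm_add_le _ _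
          have hrem : ‖NormedSpace.exp ((h : ℂ) • A) - 1 - (h : ℂ) • A‖ ≤ C * h ^ 2 := by
            calc ‖NormedSpace.exp ((h : ℂ) • A) - 1 - (h : ℂ) • A‖
                ≤ ‖(h : ℂ) • A‖ ^ 2 * Real.exp ‖(h : ℂ) • A‖ := aux_exp_remainder _
              _ = h ^ 2 * ‖A‖ ^ 2 * Real.exp (h * ‖A‖) := by rw [hnhA]; ring
              _ ≤ h ^ 2 * ‖A‖ ^ 2 * Real.exp (t * ‖A‖) := by
                  apply mul_le_mul_of_nonneg_left _ (by positivity)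
                  exact Real.exp_le_exp.mpr (mul_le_mul_of_nonneg_right hht (norm_nonneg _))
              _ = C * h ^ 2 := by rw [hCdef]; ring
          have hle : ‖NormedSpace.exp ((h : ℂ) • A)‖ ≤ 1 + ((μ + ε) * h + C * h ^ 2) := by
            linarith
          exact hle.trans (by linarith [Real.add_one_le_exp ((μ + ε) * h + C * h ^ 2)])
        have hmne : (m:ℝ) ≠ 0 := hmpos.ne'
        have hsplit : (m : ℕ) • ((h : ℂ) • A) = (t : ℂ) • A := by
          rw [← Nat.cast_smul_eq_nsmul ℂ, smul_smul]
          congr 1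
          rw [hh]
          have hmc : (m:ℂ) ≠ 0 := by exact_mod_cast hmne
          push_cast
          field_simp
        rw [← hsplit, Matrix.exp_nsmul]
        calc ‖(NormedSpace.exp ((h : ℂ) • A)) ^ m‖
            ≤ ‖NormedSpace.exp ((h : ℂ) • A)‖ ^ m := norm_pow_le' _ (by omega)
          _ ≤ (Real.exp ((μ + ε) * h + C * h ^ 2)) ^ m :=
              pow_le_pow_left₀ (norm_nonneg _) hstep m
          _ = Real.exp (m * ((μ + ε) * h + C * h ^ 2)) := (Real.exp_nat_mul _ m).symm
          _ = Real.exp ((μ + ε) * t + C * t ^ 2 / m) := by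
              congr 1
              rw [hh]
              field_simp
      have htend : Filter.Tendsto (fun m : ℕ => Real.exp ((μ + ε) * t + C * t ^ 2 / m))
          Filter.atTop (𝓝 (Real.exp ((μ + ε) * t))) := by
        have h2 : Filter.Tendsto (fun m : ℕ => (μ + ε) * t + C * t ^ 2 / m)
            Filter.atTop (𝓝 ((μ + ε) * t + 0)) :=
          Filter.Tendsto.const_add _ (tendsto_const_div_atTop_nhds_zero_nat _)
        rw [add_zero] at h2
        exact (Real.continuous_exp.tendsto _).comp h2
      refine ge_of_tendsto htend ?_
      have h1 : ∀ᶠ m : ℕ in Filter.atTop, t / m < δ :=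
        (tendsto_const_div_atTop_nhds_zero_nat t).eventually_lt_const hδpos
      filter_upwards [h1, Filter.eventually_ge_atTop 1] with m hmδ hm1
      exact bound_m m hm1 hmδ
    have htend2 : Filter.Tendsto (fun ε : ℝ => Real.exp ((μ + ε) * t)) (𝓝[>] 0)
        (𝓝 (Real.exp (μ * t))) := by
      have h2 : Filter.Tendsto (fun ε : ℝ => Real.exp ((μ + ε) * t)) (𝓝 0)
          (𝓝 (Real.exp ((μ + 0) * t))) :=
        (Real.continuous_exp.comp (by continuity)).tendsto 0
      rw [add_zero] at h2
      exact h2.mono_left nhdsWithin_le_nhds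
    refine ge_of_tendsto htend2 ?_
    filter_upwards [self_mem_nhdsWithin] with ε hε
    exact key ε hε
end

section
/- Let M be a positive-definite diagonal real N×N matrix and K a positive-semidefinite real N×N matrix, and suppose x(t) solves M ẍ = −K x. Set A = M^{-1/2} K M^{-1/2} and suppose A is invertible. Then for all t, ‖x(t)‖ ≤ ‖T‖·‖M^{1/2}‖·(‖A^{1/2}‖·‖x(0)‖ + ‖ẋ(0)‖), where T is the block operator T = −i |0⟩⟨0| ⊗ M^{-1/2} A^{-1/2} + |1⟩⟨1| ⊗ M^{-1/2}. -/
open scoped Matrix.Norms.L2Operator Kronecker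

open scoped RealInnerProductSpace
open Matrix

section OscillatorAux

lemma aux_toEuclideanLin_mul_apply {n : ℕ} (P Q : Matrix (Fin n) (Fin n) ℝ)
    (v : EuclideanSpace ℝ (Fin n)) :
    Matrix.toEuclideanLin (P * Q) v = Matrix.toEuclideanLin P (Matrix.toEuclideanLin Q v) := by
  simp [Matrix.toEuclideanLin_apply, Matrix.mulVec_mulVec]

lemma aux_norm_toEuclideanLin_le {n : ℕ} (P : Matrix (Fin n) (Fin n) ℝ)
    (v : EuclideanSpace ℝ (Fin n)) :
    ‖Matrix.toEuclideanLin P v‖ ≤ ‖P‖ * ‖v‖ := Matrix.l2_opNorm_mulVec P v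

lemma aux_inner_toEuclideanLin {n : ℕ} (P : Matrix (Fin n) (Fin n) ℝ)
    (u v : EuclideanSpace ℝ (Fin n)) :
    ⟪Matrix.toEuclideanLin P u, v⟫ = ⟪u, Matrix.toEuclideanLin Pᴴ v⟫ := by
  rw [Matrix.toEuclideanLin_conjTranspose_eq_adjoint, LinearMap.adjoint_inner_right]

lemma aux_toEuclideanLin_one {n : ℕ} (v : EuclideanSpace ℝ (Fin n)) :
    Matrix.toEuclideanLin (1 : Matrix (Fin n) (Fin n) ℝ) v = v := by
  simp [Matrix.toEuclideanLin_apply]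

open Matrix in
lemma aux_norm_le_T {n : ℕ} (B C : Matrix (Fin n) (Fin n) ℝ) :
    ‖B‖ ≤ ‖(-Complex.I) • (Matrix.single (0 : Fin 2) (0 : Fin 2) (1 : ℂ) ⊗ₖ
              (B.map (Complex.ofReal)))
            + Matrix.single (1 : Fin 2) (1 : Fin 2) (1 : ℂ) ⊗ₖ
              (C.map Complex.ofReal)‖ := by
  set T := (-Complex.I) • (Matrix.single (0 : Fin 2) (0 : Fin 2) (1 : ℂ) ⊗ₖ
              (B.map (Complex.ofReal)))
            + Matrix.single (1 : Fin 2) (1 : Fin 2) (1 : ℂ) ⊗ₖ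
              (C.map Complex.ofReal) with hT
  rw [Matrix.l2_opNorm_def]
  apply ContinuousLinearMap.opNorm_le_bound _ (norm_nonneg T)
  intro v
  show ‖Matrix.toEuclideanLin B v‖ ≤ ‖T‖ * ‖v‖
  set w : EuclideanSpace ℂ (Fin 2 × Fin n) :=
    (WithLp.equiv 2 _).symm (fun p : Fin 2 × Fin n => if p.1 = 0 then (v p.2 : ℂ) else 0) with hw
  have hwnorm : ‖w‖ = ‖v‖ := by
    rw [EuclideanSpace.norm_eq, EuclideanSpace.norm_eq]
    congr 1
    rw [Fintype.sum_prod_type, Fin.sum_univ_two]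
    simp [hw]
  have hentry : ∀ p : Fin 2 × Fin n,
      (T *ᵥ w) p =
        if p.1 = 0 then (-Complex.I) * (((B *ᵥ (WithLp.equiv 2 _) v) p.2 : ℝ) : ℂ) else 0 := by
    rintro ⟨i, j⟩
    simp only [Matrix.mulVec, dotProduct, Fintype.sum_prod_type, Fin.sum_univ_two,
      hT, Matrix.add_apply, Matrix.smul_apply, Matrix.kroneckerMap_apply,
      Matrix.single, Matrix.of_apply, Matrix.map_apply, hw, WithLp.equiv_symm_apply, PiLp.toLp_apply,
      smul_eq_mul]
    fin_cases i <;>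
      simp [Finset.mul_sum, Complex.ofReal_sum, Complex.ofReal_mul, mul_comm, mul_left_comm, mul_assoc]
  have hTw := Matrix.l2_opNorm_mulVec T w
  have heq : ‖(EuclideanSpace.equiv (Fin 2 × Fin n) ℂ).symm (T *ᵥ w)‖
      = ‖Matrix.toEuclideanLin B v‖ := by
    rw [Matrix.toEuclideanLin_apply, EuclideanSpace.norm_eq, EuclideanSpace.norm_eq]
    congr 1
    rw [Fintype.sum_prod_type, Fin.sum_univ_two]
    simp only [EuclideanSpace.equiv, LinearEquiv.coe_toEquiv, WithLp.linearEquiv_symm_apply,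
      WithLp.equiv_symm_apply, PiLp.toLp_apply]
    simp [hentry, _root_.map_mul, Complex.norm_real, sq_abs]
  rw [heq, hwnorm] at hTw
  exact hTw

end OscillatorAux

/-- Norm bound for coupled classical oscillators `M ẍ = -K x`:
`‖x(t)‖ ≤ ‖T‖ ‖M^{1/2}‖ (‖A^{1/2}‖ ‖x(0)‖ + ‖ẋ(0)‖)` where `A = M^{-1/2} K M^{-1/2}` and
`T = -i |0⟩⟨0| ⊗ M^{-1/2} A^{-1/2} + |1⟩⟨1| ⊗ M^{-1/2}`. -/
theorem oscillator_norm_bound {N : ℕ}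
    (M K : Matrix (Fin N) (Fin N) ℝ)
    (hMdiag : M.IsDiag) (hMpos : ∀ i, 0 < M i i) (hK : K.PosSemidef)
    (Msqrt : Matrix (Fin N) (Fin N) ℝ) (hMs : Msqrt.PosSemidef) (hMsq : Msqrt * Msqrt = M)
    (Asqrt : Matrix (Fin N) (Fin N) ℝ) (hAs : Asqrt.PosSemidef)
    (hAsq : Asqrt * Asqrt = Msqrt⁻¹ * K * Msqrt⁻¹)
    (hAunit : IsUnit (Msqrt⁻¹ * K * Msqrt⁻¹).det)
    (x x' x'' : ℝ → EuclideanSpace ℝ (Fin N))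
    (hx : ∀ t, HasDerivAt x (x' t) t) (hx' : ∀ t, HasDerivAt x' (x'' t) t)
    (hode : ∀ t, Matrix.toEuclideanLin M (x'' t) = - Matrix.toEuclideanLin K (x t)) :
    ∀ t : ℝ,
      ‖x t‖ ≤
        ‖(-Complex.I) • (Matrix.single (0 : Fin 2) (0 : Fin 2) (1 : ℂ) ⊗ₖ
              ((Msqrt⁻¹ * Asqrt⁻¹).map (Complex.ofReal)))
            + Matrix.single (1 : Fin 2) (1 : Fin 2) (1 : ℂ) ⊗ₖ
              (Msqrt⁻¹.map Complex.ofReal)‖ *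
          ‖Msqrt‖ * (‖Asqrt‖ * ‖x 0‖ + ‖x' 0‖) := by
  intro t
  -- symmetry facts
  have hMsH : Msqrtᴴ = Msqrt := hMs.1
  have hAsH : Asqrtᴴ = Asqrt := hAs.1
  have hKH : Kᴴ = K := hK.1
  -- M is positive definite
  have hMeq : M = Matrix.diagonal (fun i => M i i) := by
    ext i j
    by_cases h : i = j
    · subst h; simp
    · simp [Matrix.diagonal_apply_ne _ h, hMdiag h]
  have hMposdef : M.PosDef := by rw [hMeq]; exact Matrix.PosDef.diagonal hMpos
  have hMdet : M.det ≠ 0 := ne_of_gt hMposdef.det_pos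
  have hMsdet : IsUnit Msqrt.det := by
    rw [isUnit_iff_ne_zero]
    intro h
    apply hMdet
    rw [← hMsq, Matrix.det_mul, h, mul_zero]
  have hAdet : IsUnit Asqrt.det := by
    rw [isUnit_iff_ne_zero]
    intro h
    rw [← hAsq, Matrix.det_mul, h, mul_zero] at hAunit
    exact (not_isUnit_zero : ¬ IsUnit (0:ℝ)) hAunit
  -- K = Msqrt * (Asqrt * Asqrt) * Msqrt
  have hKfact : Msqrt * (Asqrt * Asqrt) * Msqrt = K := by
    rw [hAsq]
    calc Msqrt * (Msqrt⁻¹ * K * Msqrt⁻¹) * Msqrt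
        = (Msqrt * Msqrt⁻¹) * K * (Msqrt⁻¹ * Msqrt) := by
          simp only [Matrix.mul_assoc]
      _ = K := by
          rw [Matrix.mul_nonsing_inv _ hMsdet, Matrix.nonsing_inv_mul _ hMsdet, one_mul, mul_one]
  set C := Asqrt * Msqrt with hC
  have hCtC : Cᴴ * C = K := by
    rw [hC, Matrix.conjTranspose_mul, hMsH, hAsH]
    calc Msqrt * Asqrt * (Asqrt * Msqrt) = Msqrt * (Asqrt * Asqrt) * Msqrt := by
          simp only [Matrix.mul_assoc]
      _ = K := hKfact
  have hMtM : Msqrtᴴ * Msqrt = M := by rw [hMsH, hMsq]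
  have hinv : (Msqrt⁻¹ * Asqrt⁻¹) * C = 1 := by
    rw [hC]
    calc Msqrt⁻¹ * Asqrt⁻¹ * (Asqrt * Msqrt)
        = Msqrt⁻¹ * (Asqrt⁻¹ * Asqrt) * Msqrt := by simp only [Matrix.mul_assoc]
      _ = 1 := by rw [Matrix.nonsing_inv_mul _ hAdet, mul_one, Matrix.nonsing_inv_mul _ hMsdet]
  -- the energy function
  set CL : EuclideanSpace ℝ (Fin N) →L[ℝ] EuclideanSpace ℝ (Fin N) :=
    LinearMap.toContinuousLinearMap (Matrix.toEuclideanLin C) with hCL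
  set ML : EuclideanSpace ℝ (Fin N) →L[ℝ] EuclideanSpace ℝ (Fin N) :=
    LinearMap.toContinuousLinearMap (Matrix.toEuclideanLin Msqrt) with hML
  have hCLapp : ∀ v, CL v = Matrix.toEuclideanLin C v := fun v => rfl
  have hMLapp : ∀ v, ML v = Matrix.toEuclideanLin Msqrt v := fun v => rfl
  set f : ℝ → ℝ := fun t => ⟪CL (x t), CL (x t)⟫ + ⟪ML (x' t), ML (x' t)⟫ with hfdef
  have hf : ∀ t, HasDerivAt f 0 t := by
    intro t
    have h1 : HasDerivAt (fun s => CL (x s)) (CL (x' t)) t :=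
      CL.hasFDerivAt.comp_hasDerivAt t (hx t)
    have h2 : HasDerivAt (fun s => ML (x' s)) (ML (x'' t)) t :=
      ML.hasFDerivAt.comp_hasDerivAt t (hx' t)
    have := (h1.inner ℝ h1).add (h2.inner ℝ h2)
    refine this.congr_deriv ?_
    have e1 : ⟪CL (x t), CL (x' t)⟫ = ⟪x t, Matrix.toEuclideanLin K (x' t)⟫ := by
      rw [hCLapp, hCLapp, aux_inner_toEuclideanLin, ← aux_toEuclideanLin_mul_apply, hCtC]
    have e2 : ⟪CL (x' t), CL (x t)⟫ = ⟪x' t, Matrix.toEuclideanLin K (x t)⟫ := by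
      rw [hCLapp, hCLapp, aux_inner_toEuclideanLin, ← aux_toEuclideanLin_mul_apply, hCtC]
    have e3 : ⟪ML (x' t), ML (x'' t)⟫ = ⟪x' t, Matrix.toEuclideanLin M (x'' t)⟫ := by
      rw [hMLapp, hMLapp, aux_inner_toEuclideanLin, ← aux_toEuclideanLin_mul_apply, hMtM]
    have e4 : ⟪ML (x'' t), ML (x' t)⟫ = ⟪x' t, Matrix.toEuclideanLin M (x'' t)⟫ := by
      rw [real_inner_comm]; exact e3
    have e5 : ⟪x t, Matrix.toEuclideanLin K (x' t)⟫ = ⟪x' t, Matrix.toEuclideanLin K (x t)⟫ := by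
      rw [real_inner_comm, aux_inner_toEuclideanLin, hKH]
    rw [e1, e2, e3, e4, e5, hode t]
    simp [inner_neg_right]
  have hfconst : f t = f 0 :=
    is_const_of_deriv_eq_zero (fun s => (hf s).differentiableAt) (fun s => (hf s).deriv) t 0
  have hfval : ∀ s, f s = ‖CL (x s)‖ ^ 2 + ‖ML (x' s)‖ ^ 2 := by
    intro s
    rw [hfdef]
    simp only [real_inner_self_eq_norm_sq]
  have hkey : ‖CL (x t)‖ ≤ ‖CL (x 0)‖ + ‖ML (x' 0)‖ := by
    have h := hfconst
    rw [hfval, hfval] at h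
    nlinarith [norm_nonneg (CL (x t)), norm_nonneg (ML (x' t)), norm_nonneg (CL (x 0)),
      norm_nonneg (ML (x' 0))]
  -- final chain
  set T := (-Complex.I) • (Matrix.single (0 : Fin 2) (0 : Fin 2) (1 : ℂ) ⊗ₖ
              ((Msqrt⁻¹ * Asqrt⁻¹).map (Complex.ofReal)))
            + Matrix.single (1 : Fin 2) (1 : Fin 2) (1 : ℂ) ⊗ₖ
              (Msqrt⁻¹.map Complex.ofReal) with hT
  have hTB : ‖Msqrt⁻¹ * Asqrt⁻¹‖ ≤ ‖T‖ := aux_norm_le_T _ _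
  have hTnn : (0:ℝ) ≤ ‖T‖ := norm_nonneg _
  have hxt : x t = Matrix.toEuclideanLin (Msqrt⁻¹ * Asqrt⁻¹) (CL (x t)) := by
    rw [hCLapp, ← aux_toEuclideanLin_mul_apply, hinv, aux_toEuclideanLin_one]
  calc ‖x t‖ = ‖Matrix.toEuclideanLin (Msqrt⁻¹ * Asqrt⁻¹) (CL (x t))‖ := by rw [← hxt]
    _ ≤ ‖Msqrt⁻¹ * Asqrt⁻¹‖ * ‖CL (x t)‖ := aux_norm_toEuclideanLin_le _ _
    _ ≤ ‖T‖ * (‖CL (x 0)‖ + ‖ML (x' 0)‖) :=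
        mul_le_mul hTB hkey (norm_nonneg _) hTnn
    _ ≤ ‖T‖ * (‖Asqrt‖ * ‖Msqrt‖ * ‖x 0‖ + ‖Msqrt‖ * ‖x' 0‖) := by
        apply mul_le_mul_of_nonneg_left _ hTnn
        apply add_le_add
        · calc ‖CL (x 0)‖ ≤ ‖C‖ * ‖x 0‖ := by rw [hCLapp]; exact aux_norm_toEuclideanLin_le _ _
            _ ≤ ‖Asqrt‖ * ‖Msqrt‖ * ‖x 0‖ :=
              mul_le_mul_of_nonneg_right (Matrix.l2_opNorm_mul _ _) (norm_nonneg _)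
        · rw [hMLapp]; exact aux_norm_toEuclideanLin_le _ _
    _ = ‖T‖ * ‖Msqrt‖ * (‖Asqrt‖ * ‖x 0‖ + ‖x' 0‖) := by ring
end

section
/- Let M be a positive-definite diagonal real N×N matrix, K a positive-semidefinite real N×N matrix, and f : [0,T] → ℝ^N continuous. If x(t) solves M ẍ = −K x + f(t), then for all t ∈ [0,T], ‖x(t)‖ ≤ ‖T‖·( ‖A^{1/2}‖·‖M^{1/2}‖·‖x(0)‖ + ‖M^{1/2}‖·‖ẋ(0)‖ + t·max_{s∈[0,T]} ‖M^{-1/2} f(s)‖ ), where A = M^{-1/2} K M^{-1/2} and T = −i |0⟩⟨0| ⊗ M^{-1/2} A^{-1/2} + |1⟩⟨1| ⊗ M^{-1/2}. -/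
open scoped Matrix.Norms.L2Operator Kronecker RealInnerProductSpace
open Matrix

section Aux

open Matrix

private lemma kron_mulVec_first {N : ℕ} (B C : Matrix (Fin N) (Fin N) ℂ)
    (z : Fin 2 × Fin N → ℂ) (j : Fin N) :
    (((-Complex.I) • (Matrix.single (0 : Fin 2) (0 : Fin 2) (1 : ℂ) ⊗ₖ B)
      + Matrix.single (1 : Fin 2) (1 : Fin 2) (1 : ℂ) ⊗ₖ C) *ᵥ z) (0, j)
      = -Complex.I * ∑ k, B j k * z (0, k) := by
  simp only [Matrix.add_mulVec, Matrix.smul_mulVec, Pi.add_apply, Pi.smul_apply,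
    Matrix.mulVec, dotProduct, Fintype.sum_prod_type, Matrix.kroneckerMap_apply,
    Fin.sum_univ_two, Matrix.single_apply_same, Matrix.add_apply, Matrix.smul_apply,
    Matrix.single_apply_of_ne _ _ _ _ _ (by simp : ¬((0:Fin 2) = 0 ∧ (1:Fin 2) = 0)),
    Matrix.single_apply_of_ne _ _ _ _ _ (by simp : ¬((1:Fin 2) = 0 ∧ (0:Fin 2) = 0)),
    Matrix.single_apply_of_ne _ _ _ _ _ (by simp : ¬((1:Fin 2) = 0 ∧ (1:Fin 2) = 1))]
  simp [Finset.mul_sum, mul_comm, mul_assoc]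

private lemma sqrt_add_sq_le {a ε : ℝ} (ha : 0 ≤ a) (hε : 0 ≤ ε) :
    Real.sqrt (a + ε ^ 2) ≤ Real.sqrt a + ε := by
  have h1 : a + ε ^ 2 ≤ (Real.sqrt a + ε) ^ 2 := by
    have := Real.sq_sqrt ha
    have hnn : 0 ≤ Real.sqrt a * ε := mul_nonneg (Real.sqrt_nonneg a) hε
    nlinarith
  calc Real.sqrt (a + ε ^ 2) ≤ Real.sqrt ((Real.sqrt a + ε) ^ 2) := Real.sqrt_le_sqrt h1
    _ = Real.sqrt a + ε := Real.sqrt_sq (by positivity)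

end Aux

set_option maxHeartbeats 2000000 in
/-- Norm bound for the forced oscillator `M ẍ = -K x + f(t)`:
for `t ∈ [0,T]`,
`‖x(t)‖ ≤ ‖T‖ (‖A^{1/2}‖ ‖M^{1/2}‖ ‖x(0)‖ + ‖M^{1/2}‖ ‖ẋ(0)‖ + t · max_{s∈[0,T]} ‖M^{-1/2} f(s)‖)`,
where `A = M^{-1/2} K M^{-1/2}` and
`T = -i |0⟩⟨0| ⊗ M^{-1/2} A^{-1/2} + |1⟩⟨1| ⊗ M^{-1/2}`. -/
theorem forced_oscillator_norm_bound {N : ℕ} (T : ℝ) (hT : 0 ≤ T)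
    (M K : Matrix (Fin N) (Fin N) ℝ)
    (hMdiag : M.IsDiag) (hMpos : ∀ i, 0 < M i i) (hK : K.PosSemidef)
    (Msqrt : Matrix (Fin N) (Fin N) ℝ) (hMs : Msqrt.PosSemidef) (hMsq : Msqrt * Msqrt = M)
    (Asqrt : Matrix (Fin N) (Fin N) ℝ) (hAs : Asqrt.PosSemidef)
    (hAsq : Asqrt * Asqrt = Msqrt⁻¹ * K * Msqrt⁻¹)
    (hAunit : IsUnit (Msqrt⁻¹ * K * Msqrt⁻¹).det)
    (f : ℝ → EuclideanSpace ℝ (Fin N)) (hf : ContinuousOn f (Set.Icc 0 T))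
    (x x' x'' : ℝ → EuclideanSpace ℝ (Fin N))
    (hx : ∀ t, HasDerivAt x (x' t) t) (hx' : ∀ t, HasDerivAt x' (x'' t) t)
    (hode : ∀ t ∈ Set.Icc (0 : ℝ) T,
      Matrix.toEuclideanLin M (x'' t) = - Matrix.toEuclideanLin K (x t) + f t) :
    ∀ t ∈ Set.Icc (0 : ℝ) T,
      ‖x t‖ ≤
        ‖(-Complex.I) • (Matrix.single (0 : Fin 2) (0 : Fin 2) (1 : ℂ) ⊗ₖ
              ((Msqrt⁻¹ * Asqrt⁻¹).map (Complex.ofReal)))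
            + Matrix.single (1 : Fin 2) (1 : Fin 2) (1 : ℂ) ⊗ₖ
              (Msqrt⁻¹.map Complex.ofReal)‖ *
          (‖Asqrt‖ * ‖Msqrt‖ * ‖x 0‖ + ‖Msqrt‖ * ‖x' 0‖ +
            t * sSup ((fun s => ‖Matrix.toEuclideanLin Msqrt⁻¹ (f s)‖) '' Set.Icc (0 : ℝ) T)) := by
  intro t ht
  classical
  -- invertibility facts
  have hMdet : IsUnit M.det := by
    have h : M = Matrix.diagonal (fun i => M i i) := hMdiag.diagonal_diag.symm
    rw [h, Matrix.det_diagonal]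
    exact (Finset.prod_pos (fun i _ => hMpos i)).ne'.isUnit
  have hMsdet : IsUnit Msqrt.det := by
    have h : Msqrt.det * Msqrt.det = M.det := by rw [← Matrix.det_mul, hMsq]
    exact isUnit_of_mul_isUnit_left (h ▸ hMdet)
  have hAsdet : IsUnit Asqrt.det := by
    have h : Asqrt.det * Asqrt.det = (Msqrt⁻¹ * K * Msqrt⁻¹).det := by
      rw [← Matrix.det_mul, hAsq]
    exact isUnit_of_mul_isUnit_left (h ▸ hAunit)
  have hMsinv : Msqrt⁻¹ * Msqrt = 1 := Matrix.nonsing_inv_mul _ hMsdet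
  have hAsinv : Asqrt⁻¹ * Asqrt = 1 := Matrix.nonsing_inv_mul _ hAsdet
  -- matrix identities
  have id1 : (Msqrt⁻¹ * Asqrt⁻¹) * (Asqrt * Msqrt) = 1 := by
    rw [mul_assoc, ← mul_assoc Asqrt⁻¹, hAsinv, one_mul, hMsinv]
  have id2 : Msqrt⁻¹ * M = Msqrt := by rw [← hMsq, ← mul_assoc, hMsinv, one_mul]
  have id3 : Msqrt⁻¹ * K = Asqrt * (Asqrt * Msqrt) := by
    have h : Msqrt⁻¹ * K = (Msqrt⁻¹ * K * Msqrt⁻¹) * Msqrt := by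
      rw [mul_assoc, hMsinv, mul_one]
    rw [h, ← hAsq, mul_assoc]
  -- continuous linear maps
  set Tc : Matrix (Fin N) (Fin N) ℝ →
      (EuclideanSpace ℝ (Fin N) →L[ℝ] EuclideanSpace ℝ (Fin N)) :=
    fun A => Matrix.toEuclideanCLM (𝕜 := ℝ) A with hTc
  have hTcmul : ∀ (A B : Matrix (Fin N) (Fin N) ℝ) w, Tc (A * B) w = Tc A (Tc B w) := by
    intro A B w
    show (Matrix.toEuclideanCLM (𝕜 := ℝ) (A * B)) w = _
    rw [_root_.map_mul]; exact ContinuousLinearMap.mul_apply _ _ _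
  have hTcnorm : ∀ (A : Matrix (Fin N) (Fin N) ℝ) w, ‖Tc A w‖ ≤ ‖A‖ * ‖w‖ :=
    fun A w => (Matrix.toEuclideanCLM (𝕜 := ℝ) A).le_opNorm w
  have hTcone : ∀ w, Tc 1 w = w := by
    intro w
    show (Matrix.toEuclideanCLM (𝕜 := ℝ) (1 : Matrix (Fin N) (Fin N) ℝ)) w = _
    rw [_root_.map_one]; exact ContinuousLinearMap.one_apply _
  set u : ℝ → EuclideanSpace ℝ (Fin N) := fun s => Tc (Asqrt * Msqrt) (x s) with hudef
  set v : ℝ → EuclideanSpace ℝ (Fin N) := fun s => Tc Msqrt (x' s) with hvdef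
  set g : ℝ → EuclideanSpace ℝ (Fin N) := fun s => Tc Msqrt⁻¹ (f s) with hgdef
  have hu : ∀ s, HasDerivAt u (Tc Asqrt (v s)) s := by
    intro s
    have h := (Tc (Asqrt * Msqrt)).hasFDerivAt.comp_hasDerivAt s (hx s)
    rw [hTcmul] at h; exact h
  have hv : ∀ s, HasDerivAt v (Tc Msqrt (x'' s)) s := by
    intro s
    have h := (Tc Msqrt).hasFDerivAt.comp_hasDerivAt s (hx' s)
    exact h
  have hTcLin : ∀ (A : Matrix (Fin N) (Fin N) ℝ) w, Matrix.toEuclideanLin A w = Tc A w :=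
    fun A w => rfl
  have hveq : ∀ s ∈ Set.Icc (0:ℝ) T, Tc Msqrt (x'' s) = - Tc Asqrt (u s) + g s := by
    intro s hs
    have h0 := hode s hs
    rw [hTcLin, hTcLin] at h0
    have h1 := congrArg (Tc Msqrt⁻¹) h0
    rw [← hTcmul, id2] at h1
    rw [h1, map_add, map_neg, ← hTcmul, id3, hTcmul]
  -- symmetry of Asqrt
  have hsym : ∀ a b : EuclideanSpace ℝ (Fin N), ⟪Tc Asqrt a, b⟫ = ⟪a, Tc Asqrt b⟫ := by
    intro a b
    show ⟪(Matrix.toEuclideanCLM (𝕜 := ℝ) Asqrt) a, b⟫ = ⟪a, (Matrix.toEuclideanCLM (𝕜 := ℝ) Asqrt) b⟫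
    conv_rhs => rw [← hAs.1.eq, ← Matrix.star_eq_conjTranspose, map_star,
      ContinuousLinearMap.star_eq_adjoint, ContinuousLinearMap.adjoint_inner_right]
  -- energy
  set E : ℝ → ℝ := fun s => ⟪u s, u s⟫ + ⟪v s, v s⟫ with hEdef
  have hEnn : ∀ s, 0 ≤ E s :=
    fun s => add_nonneg real_inner_self_nonneg real_inner_self_nonneg
  have hEnorm : ∀ s, E s = ‖u s‖ ^ 2 + ‖v s‖ ^ 2 := by
    intro s; rw [hEdef]; simp only [real_inner_self_eq_norm_sq]
  have hEd : ∀ s, HasDerivAt E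
      (2 * ⟪u s, Tc Asqrt (v s)⟫ + 2 * ⟪v s, Tc Msqrt (x'' s)⟫) s := by
    intro s
    have h := ((hu s).inner ℝ (hu s)).add ((hv s).inner ℝ (hv s))
    refine h.congr_deriv ?_
    rw [real_inner_comm (u s) (Tc Asqrt (v s)), real_inner_comm (v s) (Tc Msqrt (x'' s))]
    ring
  have hEd' : ∀ s ∈ Set.Icc (0:ℝ) T, HasDerivAt E (2 * ⟪v s, g s⟫) s := by
    intro s hs
    have h := hEd s
    rw [hveq s hs] at h
    convert h using 1
    have h2 : ⟪u s, Tc Asqrt (v s)⟫ = ⟪v s, Tc Asqrt (u s)⟫ := by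
      rw [← hsym]; exact real_inner_comm _ _
    rw [inner_add_right, inner_neg_right, h2]; ring
  -- the sup of the forcing term
  set S : ℝ := sSup ((fun s => ‖Matrix.toEuclideanLin Msqrt⁻¹ (f s)‖) '' Set.Icc (0:ℝ) T)
    with hSdef
  have hgnorm : ∀ s, ‖Matrix.toEuclideanLin Msqrt⁻¹ (f s)‖ = ‖g s‖ := fun s => rfl
  have hbdd : BddAbove ((fun s => ‖Matrix.toEuclideanLin Msqrt⁻¹ (f s)‖) '' Set.Icc (0:ℝ) T) := by
    apply (isCompact_Icc.image_of_continuousOn _).bddAbove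
    have : ContinuousOn g (Set.Icc (0:ℝ) T) :=
      (Matrix.toEuclideanCLM (𝕜 := ℝ) Msqrt⁻¹).continuous.comp_continuousOn hf
    exact this.norm
  have hgS : ∀ s ∈ Set.Icc (0:ℝ) T, ‖g s‖ ≤ S := by
    intro s hs
    rw [← hgnorm s]
    exact le_csSup hbdd ⟨s, hs, rfl⟩
  have hS0 : 0 ≤ S := le_trans (norm_nonneg (g 0)) (hgS 0 ⟨le_refl 0, hT⟩)
  -- Gronwall-type bound
  have key : Real.sqrt (E t) ≤ Real.sqrt (E 0) + S * t := by
    have hEdiff : Differentiable ℝ E := fun s => (hEd s).differentiableAt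
    have hEc : Continuous E := hEdiff.continuous
    refine le_of_forall_pos_le_add ?_
    intro ε hε
    set φ : ℝ → ℝ := fun s => Real.sqrt (E s + ε ^ 2) - S * s with hφdef
    have hpos : ∀ s, 0 < E s + ε ^ 2 :=
      fun s => add_pos_of_nonneg_of_pos (hEnn s) (by positivity)
    have hφd : ∀ s ∈ Set.Ioo (0:ℝ) T, HasDerivAt φ
        (1 / (2 * Real.sqrt (E s + ε ^ 2)) * (2 * ⟪v s, g s⟫) - S * 1) s := by
      intro s hs
      have h1 : HasDerivAt (fun r => E r + ε ^ 2) (2 * ⟪v s, g s⟫) s :=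
        (hEd' s (Set.Ioo_subset_Icc_self hs)).add_const _
      have h2 := (Real.hasDerivAt_sqrt (hpos s).ne').comp s h1
      exact h2.sub ((hasDerivAt_id s).const_mul S)
    have hmono : AntitoneOn φ (Set.Icc 0 T) := by
      apply antitoneOn_of_deriv_nonpos (convex_Icc 0 T)
      · exact ((Real.continuous_sqrt.comp (hEc.add continuous_const)).sub
          (continuous_const.mul continuous_id)).continuousOn
      · intro s hs
        rw [interior_Icc] at hs
        exact ((hφd s hs).differentiableAt).differentiableWithinAt
      · intro s hs
        rw [interior_Icc] at hs
        rw [(hφd s hs).deriv]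
        have hq : 0 < Real.sqrt (E s + ε ^ 2) := Real.sqrt_pos.2 (hpos s)
        have hvb : ‖v s‖ ≤ Real.sqrt (E s + ε ^ 2) := by
          have h3 : ‖v s‖ ^ 2 ≤ E s + ε ^ 2 := by
            have h4 := hEnorm s
            nlinarith [sq_nonneg (‖u s‖), sq_nonneg ε]
          calc ‖v s‖ = Real.sqrt (‖v s‖ ^ 2) := (Real.sqrt_sq (norm_nonneg _)).symm
            _ ≤ _ := Real.sqrt_le_sqrt h3
        have hinner : ⟪v s, g s⟫ ≤ Real.sqrt (E s + ε ^ 2) * S := by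
          calc ⟪v s, g s⟫ ≤ ‖v s‖ * ‖g s‖ := real_inner_le_norm _ _
            _ ≤ Real.sqrt (E s + ε ^ 2) * S :=
              mul_le_mul hvb (hgS s (Set.Ioo_subset_Icc_self hs)) (norm_nonneg _)
                (Real.sqrt_nonneg _)
        have h5 : 1 / (2 * Real.sqrt (E s + ε ^ 2)) * (2 * ⟪v s, g s⟫)
            = ⟪v s, g s⟫ / Real.sqrt (E s + ε ^ 2) := by
          field_simp
        rw [h5, mul_one, sub_nonpos, div_le_iff₀ hq]
        nlinarith
    have h10 : φ t ≤ φ 0 := hmono (Set.left_mem_Icc.2 hT) ht ht.1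
    rw [hφdef] at h10
    simp only [mul_zero, sub_zero] at h10
    have h11 := sqrt_add_sq_le (hEnn 0) hε.le
    have h12 : Real.sqrt (E t) ≤ Real.sqrt (E t + ε ^ 2) :=
      Real.sqrt_le_sqrt (le_add_of_nonneg_right (sq_nonneg ε))
    linarith
  -- complex front bound
  have front : ‖x t‖ ≤
      ‖(-Complex.I) • (Matrix.single (0 : Fin 2) (0 : Fin 2) (1 : ℂ) ⊗ₖ
            ((Msqrt⁻¹ * Asqrt⁻¹).map (Complex.ofReal)))
          + Matrix.single (1 : Fin 2) (1 : Fin 2) (1 : ℂ) ⊗ₖ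
            (Msqrt⁻¹.map Complex.ofReal)‖ * Real.sqrt (E t) := by
    set B : Matrix (Fin N) (Fin N) ℂ := (Msqrt⁻¹ * Asqrt⁻¹).map Complex.ofReal with hBdef
    set C : Matrix (Fin N) (Fin N) ℂ := Msqrt⁻¹.map Complex.ofReal with hCdef
    set L : Matrix (Fin 2 × Fin N) (Fin 2 × Fin N) ℂ :=
      (-Complex.I) • (Matrix.single (0 : Fin 2) (0 : Fin 2) (1 : ℂ) ⊗ₖ B)
        + Matrix.single (1 : Fin 2) (1 : Fin 2) (1 : ℂ) ⊗ₖ C with hLdef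
    set zf : Fin 2 × Fin N → ℂ :=
      fun p => if p.1 = 0 then Complex.I * ((u t p.2 : ℝ) : ℂ) else ((v t p.2 : ℝ) : ℂ) with hzf
    set z : EuclideanSpace ℂ (Fin 2 × Fin N) := (WithLp.equiv 2 _).symm zf with hz
    -- norm of z
    have hsum : ∑ p : Fin 2 × Fin N, ‖z p‖ ^ 2 = (∑ j, ‖u t j‖ ^ 2) + ∑ j, ‖v t j‖ ^ 2 := by
      rw [Fintype.sum_prod_type, Fin.sum_univ_two]
      congr 1
      · refine Finset.sum_congr rfl fun j _ => ?_
        show ‖Complex.I * ((u t j : ℝ) : ℂ)‖ ^ 2 = ‖u t j‖ ^ 2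
        simp [norm_mul]
      · refine Finset.sum_congr rfl fun j _ => ?_
        show ‖((v t j : ℝ) : ℂ)‖ ^ 2 = ‖v t j‖ ^ 2
        simp
    have hzn : ‖z‖ = Real.sqrt (E t) := by
      rw [EuclideanSpace.norm_eq, hsum]
      congr 1
      rw [hEnorm t, EuclideanSpace.norm_eq, EuclideanSpace.norm_eq,
        Real.sq_sqrt (by positivity), Real.sq_sqrt (by positivity)]
    -- first block of L *ᵥ z
    have hLz : ∀ j, (L *ᵥ zf) (0, j) = ((x t j : ℝ) : ℂ) := by
      intro j
      rw [hLdef, kron_mulVec_first]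
      have hterm : ∀ k, B j k * zf (0, k)
          = Complex.I * (((Msqrt⁻¹ * Asqrt⁻¹) j k * u t k : ℝ) : ℂ) := by
        intro k
        simp only [hBdef, hzf, Matrix.map_apply]
        push_cast
        ring
      rw [Finset.sum_congr rfl (fun k _ => hterm k), ← Finset.mul_sum, ← mul_assoc]
      have hI : -Complex.I * Complex.I = 1 := by
        simp [Complex.I_mul_I]
      rw [hI, one_mul]
      have hx1 : ∑ k, ((Msqrt⁻¹ * Asqrt⁻¹) j k * u t k) = x t j := by
        have hufun : (fun k => u t k) = (Asqrt * Msqrt) *ᵥ (fun i => x t i) := rfl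
        have h2 : ∑ k, ((Msqrt⁻¹ * Asqrt⁻¹) j k * u t k)
            = ((Msqrt⁻¹ * Asqrt⁻¹) *ᵥ (fun k => u t k)) j := rfl
        rw [h2, hufun, Matrix.mulVec_mulVec, id1, Matrix.one_mulVec]
      rw [← Complex.ofReal_sum, hx1]
    -- conclude
    have hmain := Matrix.l2_opNorm_mulVec L z
    rw [hzn] at hmain
    refine le_trans ?_ hmain
    rw [EuclideanSpace.norm_eq, EuclideanSpace.norm_eq]
    apply Real.sqrt_le_sqrt
    have hcoe : ∀ p : Fin 2 × Fin N,
        ((EuclideanSpace.equiv (Fin 2 × Fin N) ℂ).symm (L *ᵥ z)) p = (L *ᵥ zf) p :=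
      fun p => rfl
    calc ∑ j, ‖x t j‖ ^ 2 = ∑ j, ‖(L *ᵥ zf) (0, j)‖ ^ 2 := by
          refine Finset.sum_congr rfl fun j _ => ?_
          rw [hLz j]
          simp
      _ ≤ ∑ p : Fin 2 × Fin N,
          ‖((EuclideanSpace.equiv (Fin 2 × Fin N) ℂ).symm (L *ᵥ z)) p‖ ^ 2 := by
          simp only [hcoe]
          rw [Fintype.sum_prod_type, Fin.sum_univ_two]
          exact le_add_of_nonneg_right (by positivity)
  -- assembly
  have hu0 : ‖u 0‖ ≤ ‖Asqrt‖ * ‖Msqrt‖ * ‖x 0‖ := by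
    calc ‖u 0‖ ≤ ‖Asqrt * Msqrt‖ * ‖x 0‖ := hTcnorm _ _
      _ ≤ ‖Asqrt‖ * ‖Msqrt‖ * ‖x 0‖ := by
        have := Matrix.l2_opNorm_mul Asqrt Msqrt
        exact mul_le_mul_of_nonneg_right this (norm_nonneg _)
  have hv0 : ‖v 0‖ ≤ ‖Msqrt‖ * ‖x' 0‖ := hTcnorm _ _
  have hE0 : Real.sqrt (E 0) ≤ ‖Asqrt‖ * ‖Msqrt‖ * ‖x 0‖ + ‖Msqrt‖ * ‖x' 0‖ := by
    have h1 : E 0 ≤ (‖u 0‖ + ‖v 0‖) ^ 2 := by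
      rw [hEnorm 0]
      have := mul_nonneg (norm_nonneg (u 0)) (norm_nonneg (v 0))
      nlinarith
    calc Real.sqrt (E 0) ≤ Real.sqrt ((‖u 0‖ + ‖v 0‖) ^ 2) := Real.sqrt_le_sqrt h1
      _ = ‖u 0‖ + ‖v 0‖ := Real.sqrt_sq (by positivity)
      _ ≤ _ := add_le_add hu0 hv0
  refine le_trans front ?_
  apply mul_le_mul_of_nonneg_left _ (norm_nonneg _)
  calc Real.sqrt (E t) ≤ Real.sqrt (E 0) + S * t := key
    _ ≤ (‖Asqrt‖ * ‖Msqrt‖ * ‖x 0‖ + ‖Msqrt‖ * ‖x' 0‖) + t * S := by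
        rw [mul_comm S t]; exact add_le_add_left hE0 _
    _ = _ := by rw [hSdef]
end

section
/- Linear perturbation of Hermitian evolution: let H be Hermitian and Ĥ arbitrary, and consider p̂(t) solving dp̂/dt = (−iH + λĤ)p̂ with the perturbation expansion p̂ = Σ_k λ^k p̂_k, where dp̂₀/dt = −iH p̂₀ and dp̂_k/dt = −iH p̂_k + Ĥ p̂_{k−1} with p̂_k(0) = 0 for k ≥ 1. Then ‖p̂_k(t)‖ ≤ ‖Ĥ‖^k ‖p̂₀(0)‖ t^k for all k ≥ 1, and if 1/λ ≥ ‖Ĥ‖(1 + ‖p̂(0)‖/ε)·t then ‖p̂(t) − p̂₀(t)‖ ≤ ε. -/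
open NormedSpace in
set_option maxHeartbeats 4000000 in
set_option synthInstance.maxHeartbeats 200000 in
/-- Linear perturbation of Hermitian evolution: for `dp̂/dt = (−iH + λĤ)p̂` with perturbation
expansion `p̂ = Σ_k λ^k p̂_k`, where `p̂₀` solves the unperturbed Schrödinger equation and each
`p̂_k` (`k ≥ 1`) solves `dp̂_k/dt = −iH p̂_k + Ĥ p̂_{k−1}` with `p̂_k(0) = 0`, one has
`‖p̂_k(t)‖ ≤ ‖Ĥ‖^k ‖p̂₀(0)‖ t^k` for all `k ≥ 1`, and if `1/λ ≥ ‖Ĥ‖(1 + ‖p̂(0)‖/ε)·t` then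
`‖p̂(t) − p̂₀(t)‖ ≤ ε`. -/
theorem hermitian_perturbation_bound {n : ℕ}
    (H Hh : EuclideanSpace ℂ (Fin n) →L[ℂ] EuclideanSpace ℂ (Fin n))
    (hH : IsSelfAdjoint H)
    (lam t ε : ℝ) (hlam : 0 < lam) (ht : 0 ≤ t) (hε : 0 < ε)
    (ps : ℕ → ℝ → EuclideanSpace ℂ (Fin n))
    (p : ℝ → EuclideanSpace ℂ (Fin n))
    (h0 : ∀ s : ℝ, HasDerivAt (ps 0) ((-Complex.I) • H (ps 0 s)) s)
    (hk : ∀ k, 1 ≤ k → ∀ s : ℝ,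
      HasDerivAt (ps k) ((-Complex.I) • H (ps k s) + Hh (ps (k - 1) s)) s)
    (hinit : ∀ k, 1 ≤ k → ps k 0 = 0)
    (hsum : ∀ s ∈ Set.Icc (0 : ℝ) t, Summable fun k => lam ^ k • ps k s)
    (hp : ∀ s ∈ Set.Icc (0 : ℝ) t, p s = ∑' k, lam ^ k • ps k s) :
    (∀ k, 1 ≤ k → ∀ s ∈ Set.Icc (0 : ℝ) t, ‖ps k s‖ ≤ ‖Hh‖ ^ k * ‖ps 0 0‖ * s ^ k)
      ∧ (1 / lam ≥ ‖Hh‖ * (1 + ‖p 0‖ / ε) * t → ‖p t - ps 0 t‖ ≤ ε) := by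
  set iH : EuclideanSpace ℂ (Fin n) →L[ℂ] EuclideanSpace ℂ (Fin n) := Complex.I • H with hiH
  have hI : Complex.I ∈ skewAdjoint ℂ := by
    rw [skewAdjoint.mem_iff, Complex.star_def, Complex.conj_I]
  have hIH : Complex.I • H ∈
      skewAdjoint (EuclideanSpace ℂ (Fin n) →L[ℂ] EuclideanSpace ℂ (Fin n)) :=
    hH.smul_mem_skewAdjoint hI
  have hstar_iH : star iH = -iH := by
    rw [hiH]
    exact skewAdjoint.mem_iff.mp hIH
  have hmem : ∀ s : ℝ, (s • iH) ∈
      skewAdjoint (EuclideanSpace ℂ (Fin n) →L[ℂ] EuclideanSpace ℂ (Fin n)) := by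
    intro s
    have e : (Complex.ofReal s) • iH = s • iH := algebraMap_smul ℂ s iH
    rw [skewAdjoint.mem_iff, ← e, star_smul, Complex.star_def, Complex.conj_ofReal,
      hstar_iH, smul_neg]
  set U : ℝ → (EuclideanSpace ℂ (Fin n) →L[ℂ] EuclideanSpace ℂ (Fin n)) :=
    fun s => exp (s • iH) with hU
  have hUun : ∀ s : ℝ, U s ∈ unitary (EuclideanSpace ℂ (Fin n) →L[ℂ] EuclideanSpace ℂ (Fin n)) :=
    fun s => by
      letI : NormedAlgebra ℚ (EuclideanSpace ℂ (Fin n) →L[ℂ] EuclideanSpace ℂ (Fin n)) :=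
        NormedAlgebra.restrictScalars ℚ ℂ _
      exact exp_mem_unitary_of_mem_skewAdjoint (hmem s)
  have hUnorm : ∀ (s : ℝ) (x : EuclideanSpace ℂ (Fin n)), ‖U s x‖ = ‖x‖ := by
    intro s x
    have h1 : star (U s) * U s = 1 := (Unitary.mem_iff.mp (hUun s)).1
    have h2 : (ContinuousLinearMap.adjoint (U s)) ((U s) x) = x := by
      rw [← ContinuousLinearMap.star_eq_adjoint]
      calc star (U s) ((U s) x) = (star (U s) * U s) x := rfl
        _ = (1 : EuclideanSpace ℂ (Fin n) →L[ℂ] EuclideanSpace ℂ (Fin n)) x := by rw [h1]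
        _ = x := ContinuousLinearMap.one_apply x
    have h3 : (inner ℂ ((U s) x) ((U s) x) : ℂ) = inner ℂ x x := by
      rw [← ContinuousLinearMap.adjoint_inner_left, h2]
    have h4 : ‖(U s) x‖ ^ 2 = ‖x‖ ^ 2 := by
      rw [← @inner_self_eq_norm_sq ℂ, ← @inner_self_eq_norm_sq ℂ, h3]
    calc ‖(U s) x‖ = Real.sqrt (‖(U s) x‖ ^ 2) := (Real.sqrt_sq (norm_nonneg _)).symm
      _ = Real.sqrt (‖x‖ ^ 2) := by rw [h4]
      _ = ‖x‖ := Real.sqrt_sq (norm_nonneg _)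
  have hUder : ∀ s : ℝ, HasDerivAt U ((U s) * iH) s := fun s => hasDerivAt_exp_smul_const iH s
  have hUcont : Continuous U :=
    continuous_iff_continuousAt.mpr fun s => (hUder s).continuousAt
  -- real-scalar version of `U`
  set L := ContinuousLinearMap.restrictScalarsL ℂ (EuclideanSpace ℂ (Fin n))
    (EuclideanSpace ℂ (Fin n)) ℝ ℝ with hL
  set V : ℝ → (EuclideanSpace ℂ (Fin n) →L[ℝ] EuclideanSpace ℂ (Fin n)) :=
    fun s => L (U s) with hV
  have hVder : ∀ s : ℝ, HasDerivAt V (L ((U s) * iH)) s :=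
    fun s => L.hasFDerivAt.comp_hasDerivAt s (hUder s)
  have hVapp : ∀ (s : ℝ) (x : EuclideanSpace ℂ (Fin n)), V s x = U s x := fun s x => rfl
  have hpscont : ∀ k, Continuous (ps k) := by
    intro k
    rcases Nat.eq_zero_or_pos k with hk0 | hk1
    · subst hk0
      exact continuous_iff_continuousAt.mpr fun s => (h0 s).continuousAt
    · exact continuous_iff_continuousAt.mpr fun s => (hk k hk1 s).continuousAt
  have key : ∀ k, ∀ s ∈ Set.Icc (0 : ℝ) t, ‖ps k s‖ ≤ ‖Hh‖ ^ k * ‖ps 0 0‖ * s ^ k := by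
    intro k
    induction k with
    | zero =>
      intro s _
      have hg : ∀ σ : ℝ, HasDerivAt (fun σ => V σ (ps 0 σ)) 0 σ := by
        intro σ
        have h1 := (hVder σ).clm_apply (h0 σ)
        convert h1 using 1
        show (0 : EuclideanSpace ℂ (Fin n)) =
          (L ((U σ) * iH)) (ps 0 σ) + V σ ((-Complex.I) • H (ps 0 σ))
        have e1 : (L ((U σ) * iH)) (ps 0 σ) = (U σ) (iH (ps 0 σ)) := rfl
        rw [e1, hVapp, ← map_add]
        have e2 : iH (ps 0 σ) + (-Complex.I) • H (ps 0 σ) = 0 := by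
          rw [hiH]
          simp [neg_smul]
        rw [e2, map_zero]
        all_goals rfl
      have hconst : (fun σ => V σ (ps 0 σ)) s = (fun σ => V σ (ps 0 σ)) 0 :=
        is_const_of_deriv_eq_zero (fun σ => (hg σ).differentiableAt)
          (fun σ => (hg σ).deriv) s 0
      simp only [hVapp] at hconst
      have hn : ‖ps 0 s‖ = ‖ps 0 0‖ := by
        calc ‖ps 0 s‖ = ‖U s (ps 0 s)‖ := (hUnorm s _).symm
          _ = ‖U 0 (ps 0 0)‖ := by rw [hconst]
          _ = ‖ps 0 0‖ := hUnorm 0 _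
      rw [hn]
      simp
    | succ k ih =>
      intro s hs
      obtain ⟨hs0, hst⟩ := hs
      have hder1 := hk (k + 1) (by omega)
      simp only [Nat.add_sub_cancel] at hder1
      have hg : ∀ σ : ℝ, HasDerivAt (fun σ => V σ (ps (k + 1) σ)) (U σ (Hh (ps k σ))) σ := by
        intro σ
        have h1 := (hVder σ).clm_apply (hder1 σ)
        convert h1 using 1
        show U σ (Hh (ps k σ)) =
          (L ((U σ) * iH)) (ps (k + 1) σ)
            + V σ ((-Complex.I) • H (ps (k + 1) σ) + Hh (ps k σ))
        have e1 : (L ((U σ) * iH)) (ps (k + 1) σ) = (U σ) (iH (ps (k + 1) σ)) := rfl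
        rw [e1, hVapp, ← map_add]
        congr 1
        rw [hiH]
        simp [neg_smul]
        all_goals rfl
      have hcont : Continuous fun σ => U σ (Hh (ps k σ)) :=
        hUcont.clm_apply (Hh.continuous.comp (hpscont k))
      have hftc := intervalIntegral.integral_eq_sub_of_hasDerivAt
        (f := fun σ => V σ (ps (k + 1) σ)) (f' := fun σ => U σ (Hh (ps k σ)))
        (a := 0) (b := s) (fun σ _ => hg σ) (hcont.intervalIntegrable 0 s)
      have hinit' : ps (k + 1) 0 = 0 := hinit (k + 1) (by omega)
      set C := ‖Hh‖ ^ (k + 1) * ‖ps 0 0‖ * s ^ k with hC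
      have hbound : ∀ σ ∈ Set.uIoc (0 : ℝ) s, ‖U σ (Hh (ps k σ))‖ ≤ C := by
        intro σ hσ
        rw [Set.uIoc_of_le hs0] at hσ
        have hσt : σ ∈ Set.Icc (0 : ℝ) t := ⟨le_of_lt hσ.1, le_trans hσ.2 hst⟩
        rw [hUnorm]
        calc ‖Hh (ps k σ)‖ ≤ ‖Hh‖ * ‖ps k σ‖ := Hh.le_opNorm _
          _ ≤ ‖Hh‖ * (‖Hh‖ ^ k * ‖ps 0 0‖ * σ ^ k) :=
              mul_le_mul_of_nonneg_left (ih σ hσt) (norm_nonneg _)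
          _ ≤ ‖Hh‖ * (‖Hh‖ ^ k * ‖ps 0 0‖ * s ^ k) := by
              gcongr
              exacts [hσ.1.le, hσ.2]
          _ = C := by rw [hC]; ring
      have hnorm := intervalIntegral.norm_integral_le_of_norm_le_const hbound
      rw [hftc] at hnorm
      simp only [hinit', map_zero, sub_zero, hVapp, hUnorm] at hnorm
      calc ‖ps (k + 1) s‖ ≤ C * |s| := hnorm
        _ = ‖Hh‖ ^ (k + 1) * ‖ps 0 0‖ * s ^ (k + 1) := by
            rw [hC, abs_of_nonneg hs0]; ring
  refine ⟨fun k _ s hs => key k s hs, ?_⟩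
  intro hcond
  have h0t : (0 : ℝ) ∈ Set.Icc (0 : ℝ) t := ⟨le_refl _, ht⟩
  have htt : t ∈ Set.Icc (0 : ℝ) t := ⟨ht, le_refl _⟩
  set M := ‖ps 0 0‖ with hM
  have hp0 : p 0 = ps 0 0 := by
    rw [hp 0 h0t, Summable.tsum_eq_zero_add (hsum 0 h0t)]
    have h1 : ∀ m : ℕ, lam ^ (m + 1) • ps (m + 1) 0 = 0 := fun m => by
      rw [hinit (m + 1) (by omega), smul_zero]
    simp [h1]
  set r := lam * ‖Hh‖ * t with hr
  have hrnonneg : 0 ≤ r := by positivity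
  have hcond' : r * (1 + M / ε) ≤ 1 := by
    rw [hp0] at hcond
    have h2 := mul_le_mul_of_nonneg_left hcond hlam.le
    rw [mul_one_div, div_self hlam.ne'] at h2
    calc r * (1 + M / ε) = lam * (‖Hh‖ * (1 + M / ε) * t) := by rw [hr]; ring
      _ ≤ 1 := h2
  have hptail : p t - ps 0 t = ∑' m : ℕ, lam ^ (m + 1) • ps (m + 1) t := by
    rw [hp t htt, Summable.tsum_eq_zero_add (hsum t htt)]
    simp
  have hterm : ∀ m : ℕ, ‖lam ^ (m + 1) • ps (m + 1) t‖ ≤ r ^ (m + 1) * M := by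
    intro m
    rw [norm_smul, Real.norm_eq_abs, abs_of_pos (pow_pos hlam _)]
    calc lam ^ (m + 1) * ‖ps (m + 1) t‖
        ≤ lam ^ (m + 1) * (‖Hh‖ ^ (m + 1) * M * t ^ (m + 1)) :=
          mul_le_mul_of_nonneg_left (key (m + 1) t htt) (pow_nonneg hlam.le _)
      _ = r ^ (m + 1) * M := by rw [hr, mul_pow, mul_pow]; ring
  by_cases hM0 : M = 0
  · have hz : ∀ m : ℕ, lam ^ (m + 1) • ps (m + 1) t = 0 := by
      intro m
      have h5 := hterm m
      rw [hM0, mul_zero] at h5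
      exact norm_le_zero_iff.mp h5
    rw [hptail]
    simp only [hz, tsum_zero, norm_zero]
    positivity
  · have hMpos : 0 < M := lt_of_le_of_ne (norm_nonneg _) (Ne.symm hM0)
    have hr1 : r < 1 := by nlinarith [div_pos hMpos hε]
    have hgeom : HasSum (fun m : ℕ => r ^ (m + 1) * M) ((1 - r)⁻¹ * (r * M)) := by
      have h1 := (hasSum_geometric_of_lt_one hrnonneg hr1).mul_right (r * M)
      convert h1 using 2 with m
      · rfl
      rw [pow_succ]; ring
    have hnormb : ‖∑' m : ℕ, lam ^ (m + 1) • ps (m + 1) t‖ ≤ (1 - r)⁻¹ * (r * M) :=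
      tsum_of_norm_bounded hgeom hterm
    rw [hptail]
    refine le_trans hnormb ?_
    have h1r : 0 < 1 - r := by linarith
    have hrM : r * M ≤ ε * (1 - r) := by
      have e1 : M / ε * ε = M := div_mul_cancel₀ M hε.ne'
      nlinarith [mul_le_mul_of_nonneg_right hcond' hε.le]
    calc (1 - r)⁻¹ * (r * M) ≤ (1 - r)⁻¹ * (ε * (1 - r)) :=
          mul_le_mul_of_nonneg_left hrM (inv_nonneg.mpr h1r.le)
      _ = ε := by field_simp
end
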